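/- arXiv:2305.07806 — 8 statements merged into one kernel-verified Lean document; each statement's English description precedes it below -/
import Mathlib

section
/- Let m be a nonnegative integer and let λ be an m-asymmetric partition, i.e., λ has Frobenius coordinates (α | α + m) for some strict partition α (meaning λ_i - i = α_i and λ'_i - i = α_i + m for 1 ≤ i ≤ rank(λ)). Then 2(k(λ) - k(λ')) = m·|λ|, where k(μ) = Σ_i (i-1)μ_i and |λ| is the sum of the parts of λ. -/
open Finset

/-- A Young diagram `μ` is `m`-asymmetric if its Frobenius coordinates `(α|β)` satisfy
`β i = α i + m` for all `i` up to the rank; with 0-indexed diagonal cells `(i,i) ∈ μ`,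
`α i = μ.rowLen i - i - 1` and `β i = μ.colLen i - i - 1`, this says
`μ.colLen i = μ.rowLen i + m`. -/
def YoungDiagram.IsAsymmetric (m : ℕ) (μ : YoungDiagram) : Prop :=
  ∀ i : ℕ, (i, i) ∈ μ → μ.colLen i = μ.rowLen i + m

/-!
Cut `μ` into its diagonal hooks, the cells with `min i j = r`. On the hook of `(r, r)`, with arm
length `a` and leg length `b`, the cell `(i, j)` contributes `i - j`, so twice the contribution of
the hook is `b (b + 1) - a (a + 1) = (b - a) (a + b + 1)`: the difference of leg and arm times the
size of the hook. For an `m`-asymmetric diagram `b - a = m` on every nonempty hook.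
-/

theorem two_mul_sum_range_intCast (n : ℕ) : 2 * ∑ i ∈ range n, (i : ℤ) = n * (n - 1) := by
  induction n with
  | zero => simp
  | succ n ih =>
    rw [sum_range_succ]
    push_cast
    linear_combination ih

theorem two_mul_sum_Ico_intCast_sub (a b : ℕ) :
    2 * ∑ i ∈ Ico a b, ((i : ℤ) - a) = ((b - a : ℕ) : ℤ) * ((b - a : ℕ) - 1) := by
  rw [sum_Ico_eq_sum_range]
  simpa only [Nat.cast_add, add_sub_cancel_left] using two_mul_sum_range_intCast (b - a)

namespace YoungDiagram

theorem sum_transpose_cells {M : Type*} [AddCommMonoid M] (μ : YoungDiagram) (f : ℕ × ℕ → M) :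
    ∑ u ∈ μ.transpose.cells, f u = ∑ u ∈ μ.cells, f u.swap :=
  sum_map _ _ _

def diagonalHook (μ : YoungDiagram) (r : ℕ) : Finset (ℕ × ℕ) :=
  μ.cells.filter fun u => min u.1 u.2 = r

theorem diagonalHook_eq_empty {μ : YoungDiagram} {r : ℕ} (hr : (r, r) ∉ μ) :
    μ.diagonalHook r = ∅ := by
  refine filter_eq_empty_iff.mpr fun u hu hmin => hr ?_
  exact μ.up_left_mem (hmin ▸ min_le_left _ _) (hmin ▸ min_le_right _ _) ((μ.mem_cells u).mp hu)

theorem diagonalHook_eq_arm_union_leg (μ : YoungDiagram) (r : ℕ) :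
    μ.diagonalHook r =
      (Ico r (μ.rowLen r)).image (fun j => (r, j)) ∪
        (Ico (r + 1) (μ.colLen r)).image (fun i => (i, r)) := by
  ext ⟨i, j⟩
  simp only [diagonalHook, mem_filter, mem_cells, mem_union, mem_image, mem_Ico, Prod.mk.injEq]
  constructor
  · rintro ⟨hm, hmin⟩
    rcases le_or_gt i j with hij | hij
    · obtain rfl : i = r := by omega
      exact .inl ⟨j, ⟨by omega, mem_iff_lt_rowLen.mp hm⟩, rfl, rfl⟩
    · obtain rfl : j = r := by omega
      exact .inr ⟨i, ⟨by omega, mem_iff_lt_colLen.mp hm⟩, rfl, rfl⟩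
  · rintro (⟨j', ⟨h1, h2⟩, rfl, rfl⟩ | ⟨i', ⟨h1, h2⟩, rfl, rfl⟩)
    · exact ⟨mem_iff_lt_rowLen.mpr h2, by omega⟩
    · exact ⟨mem_iff_lt_colLen.mpr h2, by omega⟩

theorem disjoint_arm_leg (R C r : ℕ) :
    Disjoint ((Ico r R).image (fun j => (r, j))) ((Ico (r + 1) C).image (fun i => (i, r))) := by
  simp only [disjoint_left, mem_image, mem_Ico]
  rintro _ ⟨j, -, rfl⟩ ⟨i, hi, hir, -⟩
  omega

theorem two_mul_sum_diagonalHook {μ : YoungDiagram} {r : ℕ} (hr : (r, r) ∈ μ) :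
    2 * ∑ u ∈ μ.diagonalHook r, ((u.1 : ℤ) - u.2) =
      ((μ.colLen r : ℤ) - μ.rowLen r) * #(μ.diagonalHook r) := by
  have hR : r < μ.rowLen r := mem_iff_lt_rowLen.mp hr
  have hC : r < μ.colLen r := mem_iff_lt_colLen.mp hr
  have hinj₁ : Function.Injective fun j : ℕ => (r, j) := fun _ _ h => (Prod.mk.inj h).2
  have hinj₂ : Function.Injective fun i : ℕ => (i, r) := fun _ _ h => (Prod.mk.inj h).1
  rw [diagonalHook_eq_arm_union_leg, sum_union (disjoint_arm_leg _ _ r),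
    card_union_of_disjoint (disjoint_arm_leg _ _ r), sum_image hinj₁.injOn, sum_image hinj₂.injOn,
    card_image_of_injective _ hinj₁, card_image_of_injective _ hinj₂, Nat.card_Ico, Nat.card_Ico]
  -- the leg sum may start at the diagonal cell, whose contribution is `r - r = 0`
  have hleg : ∑ i ∈ Ico (r + 1) (μ.colLen r), ((i : ℤ) - r) =
      ∑ i ∈ Ico r (μ.colLen r), ((i : ℤ) - r) := by
    rw [sum_eq_sum_Ico_succ_bot hC, sub_self, zero_add]
  have harm : ∑ j ∈ Ico r (μ.rowLen r), ((r : ℤ) - j) =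
      -∑ j ∈ Ico r (μ.rowLen r), ((j : ℤ) - r) := by
    rw [← sum_neg_distrib]
    simp only [neg_sub]
  rw [hleg, harm, mul_add, mul_neg, two_mul_sum_Ico_intCast_sub, two_mul_sum_Ico_intCast_sub]
  push_cast [hR.le, hC.le, Nat.sub_sub, Nat.cast_sub (Nat.succ_le_of_lt hC)]
  ring

end YoungDiagram

/-- If λ is an m-asymmetric partition (Frobenius coordinates (α | α+m)),
then 2(k(λ) - k(λ')) = m·|λ|, where k(μ) = Σ_i (i-1)μ_i (the sum over cells of the
0-based row index) and |λ| is the number of cells. -/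
theorem two_mul_k_sub_k_conj (m : ℕ) (μ : YoungDiagram) (h : μ.IsAsymmetric m) :
    2 * ((∑ u ∈ μ.cells, (u.1 : ℤ)) - ∑ u ∈ μ.transpose.cells, (u.1 : ℤ)) =
      (m : ℤ) * μ.cells.card := by
  have hmaps : ∀ u ∈ μ.cells, min u.1 u.2 ∈ range (μ.colLen 0) := fun u hu =>
    mem_range.mpr <| (min_le_left _ _).trans_lt <|
      (YoungDiagram.mem_iff_lt_colLen.mp ((μ.mem_cells u).mp hu)).trans_le
        (μ.colLen_anti 0 u.2 u.2.zero_le)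
  rw [YoungDiagram.sum_transpose_cells, ← sum_sub_distrib, ← sum_fiberwise_of_maps_to hmaps,
    card_eq_sum_card_fiberwise hmaps, mul_sum, Nat.cast_sum, mul_sum]
  refine sum_congr rfl fun r _ => ?_
  change 2 * ∑ u ∈ μ.diagonalHook r, ((u.1 : ℤ) - u.2) = m * #(μ.diagonalHook r)
  by_cases hr : (r, r) ∈ μ
  · simpa only [h r hr, Nat.cast_add, add_sub_cancel_left] using
      YoungDiagram.two_mul_sum_diagonalHook hr
  · simp [YoungDiagram.diagonalHook_eq_empty hr]
end

section
/- A partition λ has Frobenius coordinates (α | α + m) for a strict partition α = (α_1 > α_2 > ... > α_r ≥ 0) and an integer m ≥ 0 if and only if λ equals (α_1+1, α_2+2, ..., α_r+r) followed by the part r repeated (α_r + m) times, then the part (r-1) repeated (α_{r-1} - α_r - 1) times, ..., then the part 1 repeated (α_1 - α_2 - 1) times. -/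
private lemma nat_eq_of_lt_iff {a b : ℕ} (h : ∀ j, j < a ↔ j < b) : a = b := by
  have h1 := h a; have h2 := h b; omega

private lemma block_getD {r : ℕ} {α : ℕ → ℕ}
    (hα : ∀ ⦃i j : ℕ⦄, i < j → j < r → α j < α i)
    (hkey : ∀ ⦃i j : ℕ⦄, i ≤ j → j < r → α j + j ≤ α i + i) :
    ∀ s, s < r → ∀ k j,
      (j < ((List.range s).reverse.flatMap fun t =>
        List.replicate (α t - α (t + 1) - 1) (t + 1)).getD k 0) ↔
      (j < s ∧ k + α s + s < α j + j) := by
  intro s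
  induction s with
  | zero => intro _ k j; simp
  | succ s ih =>
    intro hs k j
    rw [List.range_succ, List.reverse_append, List.reverse_singleton,
      List.singleton_append, List.flatMap_cons]
    have h2 : α (s + 1) < α s := hα (Nat.lt_succ_self s) hs
    have h1 : α s + s ≤ α j + j ∨ s < j := by
      rcases Nat.lt_or_ge j (s + 1) with h | h
      · exact Or.inl (hkey (by omega) (by omega))
      · exact Or.inr (by omega)
    by_cases hk : k < α s - α (s + 1) - 1
    · rw [List.getD_append _ _ _ _ (by simpa using hk),
        List.getD_eq_getElem _ _ (by simpa using hk), List.getElem_replicate]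
      omega
    · rw [List.getD_append_right _ _ _ _ (by simpa using hk), List.length_replicate,
        ih (by omega) _ j]
      by_cases hj : j = s
      · subst hj; omega
      · omega

private lemma full_getD {r m : ℕ} {α : ℕ → ℕ} (hr : 0 < r)
    (hα : ∀ ⦃i j : ℕ⦄, i < j → j < r → α j < α i)
    (hkey : ∀ ⦃i j : ℕ⦄, i ≤ j → j < r → α j + j ≤ α i + i) :
    ∀ i j, (j < ((List.ofFn fun i : Fin r => α i + (i + 1)) ++
        List.replicate (α (r - 1) + m) r ++
        ((List.range (r - 1)).reverse.flatMap fun t =>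
          List.replicate (α t - α (t + 1) - 1) (t + 1))).getD i 0) ↔
      (if i < r then j < α i + i + 1 else j < r ∧ i < α j + m + j + 1) := by
  intro i j
  rw [List.append_assoc]
  by_cases hi : i < r
  · rw [List.getD_append _ _ _ _ (by simpa using hi),
      List.getD_eq_getElem _ _ (by simpa using hi), if_pos hi]
    simp only [List.getElem_ofFn]
    omega
  · rw [List.getD_append_right _ _ _ _ (by simpa using hi), List.length_ofFn, if_neg hi]
    have hjr : j < r → α (r - 1) + (r - 1) ≤ α j + j := fun h => hkey (by omega) (by omega)
    by_cases hk : i - r < α (r - 1) + m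
    · rw [List.getD_append _ _ _ _ (by simpa using hk),
        List.getD_eq_getElem _ _ (by simpa using hk), List.getElem_replicate]
      constructor
      · intro h; exact ⟨h, by have := hjr h; omega⟩
      · intro h; exact h.1
    · rw [List.getD_append_right _ _ _ _ (by simpa using hk), List.length_replicate,
        block_getD hα hkey (r - 1) (by omega) _ j]
      by_cases hj : j = r - 1
      · subst hj; omega
      · constructor
        · rintro ⟨h1, h2⟩; exact ⟨by omega, by omega⟩
        · rintro ⟨h1, h2⟩
          refine ⟨by omega, ?_⟩
          have := hjr h1
          omega

private lemma rowLens_eq_iff {μ : YoungDiagram} {L : List ℕ} (hpos : ∀ x ∈ L, 0 < x) :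
    μ.rowLens = L ↔ ∀ i, μ.rowLen i = L.getD i 0 := by
  constructor
  · rintro rfl i
    by_cases hi : i < μ.rowLens.length
    · rw [List.getD_eq_getElem _ _ hi, YoungDiagram.get_rowLens]
    · rw [List.getD_eq_default _ _ (le_of_not_gt hi)]
      rw [YoungDiagram.length_rowLens] at hi
      have : (i, 0) ∉ μ := by rw [YoungDiagram.mem_iff_lt_colLen]; omega
      rw [YoungDiagram.mem_iff_lt_rowLen] at this
      omega
  · intro h
    have hlen : μ.colLen 0 = L.length := by
      apply nat_eq_of_lt_iff
      intro i
      constructor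
      · intro hi
        by_contra hc
        have h0 : (i, 0) ∈ μ := YoungDiagram.mem_iff_lt_colLen.2 hi
        rw [YoungDiagram.mem_iff_lt_rowLen, h i,
          List.getD_eq_default _ _ (le_of_not_gt hc)] at h0
        omega
      · intro hi
        rw [YoungDiagram.mem_iff_lt_colLen.symm, YoungDiagram.mem_iff_lt_rowLen, h i,
          List.getD_eq_getElem _ _ hi]
        exact hpos _ (List.getElem_mem hi)
    apply List.ext_getElem
    · rw [YoungDiagram.length_rowLens, hlen]
    · intro i h1 h2
      rw [YoungDiagram.get_rowLens, h i, List.getD_eq_getElem _ _ h2]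

/-- A partition λ has Frobenius coordinates (α | α + m), for a strict
partition α = (α 0 > α 1 > ... > α (r-1) ≥ 0) of length r and m ≥ 0, if and only if the
list of parts of λ is
(α 0 + 1, α 1 + 2, ..., α (r-1) + r) followed by the part r repeated (α (r-1) + m) times,
then the part (r-1) repeated (α (r-2) - α (r-1) - 1) times, ..., then the part 1
repeated (α 0 - α 1 - 1) times.

Frobenius coordinates: with 0-indexing the rank condition is `(i,i) ∈ μ ↔ i < r`,
and `α i = μ.rowLen i - i - 1`, `β i = μ.colLen i - i - 1` for `i < r`;
`(α | α + m)` means `μ.rowLen i = α i + i + 1` and `μ.colLen i = (α i + m) + i + 1`. -/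
theorem frobenius_asymmetric_iff_parts_list (μ : YoungDiagram) (m r : ℕ) (α : ℕ → ℕ)
    (hα : ∀ ⦃i j : ℕ⦄, i < j → j < r → α j < α i) :
    ((∀ i : ℕ, (i, i) ∈ μ ↔ i < r) ∧
      ∀ i < r, μ.rowLen i = α i + i + 1 ∧ μ.colLen i = (α i + m) + i + 1) ↔
    μ.rowLens =
      (if r = 0 then ([] : List ℕ) else
        (List.ofFn fun i : Fin r => α i + (i + 1)) ++
        List.replicate (α (r - 1) + m) r ++
        ((List.range (r - 1)).reverse.flatMap fun t =>
          List.replicate (α t - α (t + 1) - 1) (t + 1))) := by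
  have hkey : ∀ ⦃i j : ℕ⦄, i ≤ j → j < r → α j + j ≤ α i + i := by
    have h : ∀ d i, i + d < r → α (i + d) + d ≤ α i := by
      intro d
      induction d with
      | zero => intro i _; simp
      | succ d ih =>
        intro i hi
        have h1 := ih i (by omega)
        have h2 : α (i + d + 1) < α (i + d) := hα (by omega) (by omega)
        have : i + (d + 1) = i + d + 1 := by omega
        rw [this]
        omega
    intro i j hij hj
    have := h (j - i) i (by omega)
    have : α (i + (j - i)) + (j - i) ≤ α i := this
    have he : i + (j - i) = j := by omega
    rw [he] at this
    omega
  by_cases hr : r = 0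
  · subst hr
    rw [if_pos rfl]
    constructor
    · rintro ⟨hd, -⟩
      have h0 : μ.colLen 0 = 0 := by
        by_contra hc
        have : (0, 0) ∈ μ := YoungDiagram.mem_iff_lt_colLen.2 (by omega)
        exact absurd ((hd 0).1 this) (by omega)
      rw [← List.length_eq_zero_iff, YoungDiagram.length_rowLens]
      exact h0
    · intro h
      have h0 : μ.colLen 0 = 0 := by
        rw [← YoungDiagram.length_rowLens, h]; rfl
      constructor
      · intro i
        simp only [Nat.not_lt_zero, iff_false]
        intro hc
        have : (0, 0) ∈ μ := μ.up_left_mem (Nat.zero_le i) (Nat.zero_le i) hc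
        rw [YoungDiagram.mem_iff_lt_colLen] at this
        omega
      · intro i hi; omega
  · rw [if_neg hr]
    have hr' : 0 < r := Nat.pos_of_ne_zero hr
    have hpos : ∀ x ∈ (List.ofFn fun i : Fin r => α i + (i + 1)) ++
        List.replicate (α (r - 1) + m) r ++
        ((List.range (r - 1)).reverse.flatMap fun t =>
          List.replicate (α t - α (t + 1) - 1) (t + 1)), 0 < x := by
      intro x hx
      simp only [List.mem_append, List.mem_ofFn, List.mem_replicate, List.mem_flatMap] at hx
      rcases hx with (⟨i, hi⟩ | ⟨-, rfl⟩) | ⟨t, -, -, rfl⟩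
      · subst hi; exact Nat.add_pos_right _ (Nat.succ_pos _)
      · exact hr'
      · omega
    rw [rowLens_eq_iff hpos]
    have hmem : (∀ i, μ.rowLen i = ((List.ofFn fun i : Fin r => α i + (i + 1)) ++
        List.replicate (α (r - 1) + m) r ++
        ((List.range (r - 1)).reverse.flatMap fun t =>
          List.replicate (α t - α (t + 1) - 1) (t + 1))).getD i 0) ↔ ∀ i j, ((i, j) ∈ μ ↔
        (if i < r then j < α i + i + 1 else j < r ∧ i < α j + m + j + 1)) := by
      constructor
      · intro h i j
        rw [YoungDiagram.mem_iff_lt_rowLen, h i, full_getD hr' hα hkey i j]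
      · intro h i
        apply nat_eq_of_lt_iff
        intro j
        rw [← YoungDiagram.mem_iff_lt_rowLen, h i j, full_getD hr' hα hkey i j]
    rw [hmem]
    constructor
    · rintro ⟨hd, hrc⟩ i j
      by_cases hi : i < r
      · rw [if_pos hi, YoungDiagram.mem_iff_lt_rowLen, (hrc i hi).1]
      · rw [if_neg hi]
        constructor
        · intro h
          have hj : j < r := by
            by_contra hj
            have : (r, r) ∈ μ := μ.up_left_mem (by omega) (by omega) h
            exact absurd ((hd r).1 this) (by omega)
          refine ⟨hj, ?_⟩
          rw [YoungDiagram.mem_iff_lt_colLen, (hrc j hj).2] at h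
          omega
        · rintro ⟨hj, h⟩
          rw [YoungDiagram.mem_iff_lt_colLen, (hrc j hj).2]
          omega
    · intro h
      constructor
      · intro i
        rw [h i i]
        by_cases hi : i < r
        · rw [if_pos hi]; omega
        · rw [if_neg hi]; omega
      · intro i hi
        constructor
        · apply nat_eq_of_lt_iff
          intro j
          rw [← YoungDiagram.mem_iff_lt_rowLen, h i j, if_pos hi]
        · apply nat_eq_of_lt_iff
          intro j
          rw [← YoungDiagram.mem_iff_lt_colLen, h j i]
          by_cases hj : j < r
          · rw [if_pos hj]
            have h1 : (i ≤ j ∧ α j + j ≤ α i + i) ∨ (j ≤ i ∧ α i + i ≤ α j + j) := by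
              rcases Nat.le_total i j with hc | hc
              · exact Or.inl ⟨hc, hkey hc hj⟩
              · exact Or.inr ⟨hc, hkey hc hi⟩
            omega
          · rw [if_neg hj]
            simp only [hi, true_and]
end

section
/- The map sending a partition λ to its content sequence x(λ), where x(λ)_i is the number of cells of λ with content i, is a bijection from the set of all partitions onto the set of content sequences: bi-infinite sequences of nonnegative integers that are unimodal with maximum at index 0 (i.e., x_{-2} ≤ x_{-1} ≤ x_0 ≥ x_1 ≥ x_2 ≥ ...), have finite support, and contain each value in {1, ..., x_0 - 1} at least once on each side of index 0. -/
/-- The number of cells of the Young diagram `μ` having content `a` (the content of a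
cell `(i,j)` is `j - i`). -/
def contentCount (μ : YoungDiagram) (a : ℤ) : ℕ :=
  (μ.cells.filter fun u => (u.2 : ℤ) - (u.1 : ℤ) = a).card

/-- A bi-infinite sequence of nonnegative integers is a content sequence if it is
unimodal with maximum at index 0, has finite support, and contains each value in
{1, ..., x 0 - 1} at least once on each side of the index 0. -/
def IsContentSequence (x : ℤ → ℕ) : Prop :=
  (∀ a b : ℤ, a ≤ b → b ≤ 0 → x a ≤ x b) ∧
  (∀ a b : ℤ, 0 ≤ a → a ≤ b → x b ≤ x a) ∧
  {a : ℤ | x a ≠ 0}.Finite ∧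
  (∀ v : ℕ, 1 ≤ v → v < x 0 → (∃ a : ℤ, a < 0 ∧ x a = v) ∧ (∃ a : ℤ, 0 < a ∧ x a = v))

section Aux

/-- A downward-closed finset of naturals is an initial segment. -/
lemma mem_iff_lt_card_of_down (T : Finset ℕ) (hT : ∀ k ∈ T, ∀ m, m ≤ k → m ∈ T) (k : ℕ) :
    k ∈ T ↔ k < T.card := by
  constructor
  · intro hk
    have hsub : Finset.range (k + 1) ⊆ T := by
      intro m hm
      exact hT k hk m (Nat.lt_succ_iff.mp (Finset.mem_range.mp hm))
    have := Finset.card_le_card hsub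
    simp only [Finset.card_range] at this
    omega
  · intro h
    by_contra hk
    have hsub : T ⊆ Finset.range k := by
      intro m hm
      rw [Finset.mem_range]
      by_contra hmk
      exact hk (hT m hm k (le_of_not_gt hmk))
    have := Finset.card_le_card hsub
    simp only [Finset.card_range] at this
    omega

/-- Key structural lemma: a cell `(i,j)` belongs to `μ` iff `min i j` is less than the
number of cells of `μ` of content `j - i`. -/
lemma mem_iff_min_lt (μ : YoungDiagram) (i j : ℕ) :
    (i, j) ∈ μ ↔ min i j < contentCount μ ((j : ℤ) - (i : ℤ)) := by
  classical
  set a : ℤ := (j : ℤ) - (i : ℤ) with ha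
  set S : Finset (ℕ × ℕ) := μ.cells.filter (fun u => (u.2 : ℤ) - (u.1 : ℤ) = a) with hS
  have hmemS : ∀ u : ℕ × ℕ, u ∈ S ↔ (u ∈ μ ∧ (u.2 : ℤ) - (u.1 : ℤ) = a) := by
    intro u
    simp [hS, Finset.mem_filter, YoungDiagram.mem_cells]
  set T : Finset ℕ := S.image (fun u => min u.1 u.2) with hT
  have hcard : T.card = S.card := by
    apply Finset.card_image_of_injOn
    intro u hu v hv huv
    rw [Finset.mem_coe, hmemS] at hu hv
    obtain ⟨u1, u2⟩ := u
    obtain ⟨v1, v2⟩ := v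
    simp only at huv
    have hu2 := hu.2
    have hv2 := hv.2
    simp only at hu2 hv2
    have : u1 = v1 ∧ u2 = v2 := by omega
    simp [this.1, this.2]
  have hdown : ∀ k ∈ T, ∀ m, m ≤ k → m ∈ T := by
    intro k hk m hm
    rw [hT, Finset.mem_image] at hk
    obtain ⟨u, hu, hku⟩ := hk
    rw [hmemS] at hu
    obtain ⟨u1, u2⟩ := u
    simp only at hku
    have hu2 := hu.2
    simp only at hu2
    refine Finset.mem_image.mpr ⟨(u1 - (k - m), u2 - (k - m)), ?_, ?_⟩
    · rw [hmemS]
      refine ⟨μ.up_left_mem (Nat.sub_le _ _) (Nat.sub_le _ _) hu.1, ?_⟩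
      simp only
      omega
    · simp only
      omega
  have hmm : (i, j) ∈ μ ↔ min i j ∈ T := by
    constructor
    · intro h
      exact Finset.mem_image.mpr ⟨(i, j), (hmemS _).mpr ⟨h, rfl⟩, rfl⟩
    · intro h
      rw [hT, Finset.mem_image] at h
      obtain ⟨u, hu, hmin⟩ := h
      rw [hmemS] at hu
      obtain ⟨u1, u2⟩ := u
      have hu2 := hu.2
      simp only at hu2 hmin
      have : u1 = i ∧ u2 = j := by omega
      rw [← this.1, ← this.2]
      exact hu.1
  rw [hmm, mem_iff_lt_card_of_down T hdown, hcard]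
  rfl

lemma cc_lt_iff_pos (μ : YoungDiagram) (k : ℕ) (a : ℤ) (ha : 0 ≤ a) :
    k < contentCount μ a ↔ (k, k + a.toNat) ∈ μ := by
  have h := mem_iff_min_lt μ k (k + a.toNat)
  have e1 : ((k + a.toNat : ℕ) : ℤ) - (k : ℤ) = a := by push_cast; omega
  rw [e1, min_eq_left (Nat.le_add_right _ _)] at h
  exact h.symm

lemma cc_lt_iff_neg (μ : YoungDiagram) (k : ℕ) (a : ℤ) (ha : a ≤ 0) :
    k < contentCount μ a ↔ (k + (-a).toNat, k) ∈ μ := by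
  have h := mem_iff_min_lt μ (k + (-a).toNat) k
  have e1 : ((k : ℤ)) - ((k + (-a).toNat : ℕ) : ℤ) = a := by push_cast; omega
  rw [e1, min_eq_right (Nat.le_add_right _ _)] at h
  exact h.symm

lemma cc_mono_left (μ : YoungDiagram) (a b : ℤ) (hab : a ≤ b) (hb : b ≤ 0) :
    contentCount μ a ≤ contentCount μ b := by
  rcases Nat.eq_zero_or_pos (contentCount μ a) with h | h
  · omega
  set k := contentCount μ a - 1 with hk
  have h1 : k < contentCount μ a := by omega
  have hcell := (cc_lt_iff_neg μ k a (hab.trans hb)).mp h1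
  have hcell2 : (k + (-b).toNat, k) ∈ μ := μ.up_left_mem (by omega) le_rfl hcell
  have := (cc_lt_iff_neg μ k b hb).mpr hcell2
  omega

lemma cc_mono_right (μ : YoungDiagram) (a b : ℤ) (ha : 0 ≤ a) (hab : a ≤ b) :
    contentCount μ b ≤ contentCount μ a := by
  rcases Nat.eq_zero_or_pos (contentCount μ b) with h | h
  · omega
  set k := contentCount μ b - 1 with hk
  have h1 : k < contentCount μ b := by omega
  have hcell := (cc_lt_iff_pos μ k b (ha.trans hab)).mp h1
  have hcell2 : (k, k + a.toNat) ∈ μ := μ.up_left_mem le_rfl (by omega) hcell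
  have := (cc_lt_iff_pos μ k a ha).mpr hcell2
  omega

lemma cc_stepR (μ : YoungDiagram) (a : ℤ) (ha : 0 ≤ a) :
    contentCount μ a ≤ contentCount μ (a + 1) + 1 := by
  rcases le_or_gt (contentCount μ a) 1 with h | h
  · omega
  set k := contentCount μ a - 2 with hk
  have h1 : k + 1 < contentCount μ a := by omega
  have hcell := (cc_lt_iff_pos μ (k + 1) a ha).mp h1
  have hcell2 : (k, k + (a + 1).toNat) ∈ μ := by
    have : (k, k + 1 + a.toNat) ∈ μ := μ.up_left_mem (by omega) le_rfl hcell
    have e : k + (a + 1).toNat = k + 1 + a.toNat := by omega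
    rw [e]
    exact this
  have := (cc_lt_iff_pos μ k (a + 1) (by omega)).mpr hcell2
  omega

lemma cc_stepL (μ : YoungDiagram) (a : ℤ) (ha : a ≤ 0) :
    contentCount μ a ≤ contentCount μ (a - 1) + 1 := by
  rcases le_or_gt (contentCount μ a) 1 with h | h
  · omega
  set k := contentCount μ a - 2 with hk
  have h1 : k + 1 < contentCount μ a := by omega
  have hcell := (cc_lt_iff_neg μ (k + 1) a ha).mp h1
  have hcell2 : (k + (-(a - 1)).toNat, k) ∈ μ := by
    have : (k + 1 + (-a).toNat, k) ∈ μ := μ.up_left_mem le_rfl (by omega) hcell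
    have e : k + (-(a - 1)).toNat = k + 1 + (-a).toNat := by omega
    rw [e]
    exact this
  have := (cc_lt_iff_neg μ k (a - 1) (by omega)).mpr hcell2
  omega

lemma cc_support (μ : YoungDiagram) :
    ∃ C : ℕ, ∀ a : ℤ, contentCount μ a ≠ 0 → a.natAbs ≤ C := by
  refine ⟨μ.cells.sup (fun u => u.1 + u.2), ?_⟩
  intro a ha
  obtain ⟨u, hu⟩ := Finset.card_pos.mp (Nat.pos_of_ne_zero ha)
  rw [Finset.mem_filter] at hu
  have hle := Finset.le_sup (f := fun u : ℕ × ℕ => u.1 + u.2) hu.1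
  have hu2 := hu.2
  omega

/-- Discrete intermediate value theorem. -/
lemma ivt (f : ℕ → ℕ) (hstep : ∀ n, f n ≤ f (n + 1) + 1) (v : ℕ) :
    ∀ N : ℕ, v ≤ f 0 → f N ≤ v → ∃ n, f n = v := by
  intro N
  induction N with
  | zero => intro h1 h2; exact ⟨0, le_antisymm h2 h1⟩
  | succ N ih =>
    intro h1 h2
    by_cases h : f N ≤ v
    · exact ih h1 h
    · push_neg at h
      have := hstep N
      exact ⟨N + 1, by omega⟩

end Aux

section SurjAux

variable {x : ℤ → ℕ}

lemma ics_stepR (hx : IsContentSequence x) (a : ℤ) (ha : 0 ≤ a) : x a ≤ x (a + 1) + 1 := by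
  obtain ⟨h1, h2, h3, h4⟩ := hx
  by_contra h
  push_neg at h
  set v := x a - 1 with hv
  have hv1 : 1 ≤ v := by omega
  have hxa0 : x a ≤ x 0 := h2 0 a le_rfl ha
  have hv0 : v < x 0 := by omega
  obtain ⟨-, b, hb, hbv⟩ := h4 v hv1 hv0
  rcases le_or_gt b a with hba | hba
  · have := h2 b a (by omega) hba
    omega
  · have := h2 (a + 1) b (by omega) (by omega)
    omega

lemma ics_stepL (hx : IsContentSequence x) (a : ℤ) (ha : a ≤ 0) : x a ≤ x (a - 1) + 1 := by
  obtain ⟨h1, h2, h3, h4⟩ := hx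
  by_contra h
  push_neg at h
  set v := x a - 1 with hv
  have hv1 : 1 ≤ v := by omega
  have hxa0 : x a ≤ x 0 := h1 a 0 ha le_rfl
  have hv0 : v < x 0 := by omega
  obtain ⟨⟨b, hb, hbv⟩, -⟩ := h4 v hv1 hv0
  rcases le_or_gt a b with hba | hba
  · have := h1 a b hba (by omega)
    omega
  · have := h1 b (a - 1) (by omega) (by omega)
    omega

lemma ics_downJ (hx : IsContentSequence x) (i j : ℕ) (h : min i (j + 1) < x ((j : ℤ) + 1 - i)) :
    min i j < x ((j : ℤ) - i) := by
  obtain ⟨h1, h2, h3, h4⟩ := hx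
  rcases Nat.lt_or_ge j i with hij | hij
  · rcases Nat.eq_or_lt_of_le hij with heq | hlt
    · -- i = j + 1
      have e : (j : ℤ) + 1 - i = 0 := by omega
      rw [e] at h
      have hmin : min i (j + 1) = i := by omega
      rw [hmin] at h
      have hs := ics_stepL (x := x) ⟨h1, h2, h3, h4⟩ 0 le_rfl
      have e2 : (j : ℤ) - i = 0 - 1 := by omega
      rw [e2]
      omega
    · -- i > j + 1
      have hmin : min i (j + 1) = j + 1 := by omega
      rw [hmin] at h
      have hs := ics_stepL (x := x) ⟨h1, h2, h3, h4⟩ ((j : ℤ) + 1 - i) (by omega)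
      have e2 : (j : ℤ) + 1 - i - 1 = (j : ℤ) - i := by ring
      rw [e2] at hs
      omega
  · -- i ≤ j
    have hmin : min i (j + 1) = i := by omega
    have hmin2 : min i j = i := by omega
    rw [hmin] at h
    rw [hmin2]
    have := h2 ((j : ℤ) - i) ((j : ℤ) + 1 - i) (by omega) (by omega)
    omega

lemma ics_downI (hx : IsContentSequence x) (i j : ℕ) (h : min (i + 1) j < x ((j : ℤ) - (i + 1))) :
    min i j < x ((j : ℤ) - i) := by
  obtain ⟨h1, h2, h3, h4⟩ := hx
  rcases Nat.lt_or_ge i j with hij | hij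
  · rcases Nat.eq_or_lt_of_le hij with heq | hlt
    · -- j = i + 1
      have e : (j : ℤ) - (i + 1) = 0 := by omega
      rw [e] at h
      have hmin : min (i + 1) j = j := by omega
      rw [hmin] at h
      have hs := ics_stepR (x := x) ⟨h1, h2, h3, h4⟩ 0 le_rfl
      have hmin2 : min i j = i := by omega
      rw [hmin2]
      have e2 : (j : ℤ) - i = 0 + 1 := by omega
      rw [e2]
      omega
    · -- j > i + 1
      have hmin : min (i + 1) j = i + 1 := by omega
      rw [hmin] at h
      have hs := ics_stepR (x := x) ⟨h1, h2, h3, h4⟩ ((j : ℤ) - (i + 1)) (by omega)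
      have e2 : (j : ℤ) - (i + 1) + 1 = (j : ℤ) - i := by ring
      rw [e2] at hs
      omega
  · -- j ≤ i
    have hmin : min (i + 1) j = j := by omega
    have hmin2 : min i j = j := by omega
    rw [hmin] at h
    rw [hmin2]
    have := h1 ((j : ℤ) - (i + 1)) ((j : ℤ) - i) (by omega) (by omega)
    omega

lemma ics_cell (hx : IsContentSequence x) : ∀ n i j i' j' : ℕ, i' ≤ i → j' ≤ j → (i - i') + (j - j') = n →
    min i j < x ((j : ℤ) - i) → min i' j' < x ((j' : ℤ) - i') := by
  intro n
  induction n with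
  | zero =>
    intro i j i' j' hi hj hn h
    have : i' = i ∧ j' = j := by omega
    rw [this.1, this.2]
    exact h
  | succ n ih =>
    intro i j i' j' hi hj hn h
    rcases Nat.lt_or_ge j' j with hjj | hjj
    · obtain ⟨j0, rfl⟩ : ∃ j0, j = j0 + 1 := ⟨j - 1, by omega⟩
      refine ih i j0 i' j' hi (by omega) (by omega) ?_
      apply ics_downJ (x := x) hx
      have e : (j0 : ℤ) + 1 - i = ((j0 + 1 : ℕ) : ℤ) - i := by push_cast; ring
      rw [e]
      exact h
    · have hje : j' = j := by omega
      obtain ⟨i0, rfl⟩ : ∃ i0, i = i0 + 1 := ⟨i - 1, by omega⟩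
      refine ih i0 j i' j' (by omega) hj (by omega) ?_
      apply ics_downI (x := x) hx
      have e : (j : ℤ) - ((i0 : ℤ) + 1) = (j : ℤ) - ((i0 + 1 : ℕ) : ℤ) := by push_cast; ring
      rw [e]
      exact h

end SurjAux

/-- The map sending a partition λ to its content sequence is a bijection
from the set of all partitions onto the set of content sequences. -/
theorem contentSequence_bijOn :
    Set.BijOn (fun μ : YoungDiagram => fun a : ℤ => contentCount μ a)
      Set.univ {x : ℤ → ℕ | IsContentSequence x} := by
  classical
  refine ⟨?_, ?_, ?_⟩
  · -- MapsTo
    intro μ _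
    simp only [Set.mem_setOf_eq]
    refine ⟨?_, ?_, ?_, ?_⟩
    · intro a b hab hb
      exact cc_mono_left μ a b hab hb
    · intro a b ha hab
      exact cc_mono_right μ a b ha hab
    · obtain ⟨C, hC⟩ := cc_support μ
      apply (Set.finite_Icc (-(C : ℤ)) C).subset
      intro a ha
      simp only [Set.mem_setOf_eq] at ha
      have := hC a ha
      simp only [Set.mem_Icc]
      omega
    · intro v hv1 hv2
      simp only at hv2
      obtain ⟨C, hC⟩ := cc_support μ
      constructor
      · -- negative side
        have hstep : ∀ n : ℕ, contentCount μ (-(n : ℤ) - 1) ≤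
            contentCount μ (-((n + 1 : ℕ) : ℤ) - 1) + 1 := by
          intro n
          have h := cc_stepL μ (-(n : ℤ) - 1) (by omega)
          have e : (-(n : ℤ) - 1) - 1 = -((n + 1 : ℕ) : ℤ) - 1 := by push_cast; ring
          rw [e] at h
          exact h
        have h0 : v ≤ contentCount μ (-(0 : ℕ) - 1) := by
          have h := cc_stepL μ 0 le_rfl
          have e : (0 : ℤ) - 1 = -((0 : ℕ) : ℤ) - 1 := by norm_num
          rw [e] at h
          omega
        have hN : contentCount μ (-((C : ℕ) : ℤ) - 1) ≤ v := by
          have : contentCount μ (-((C : ℕ) : ℤ) - 1) = 0 := by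
            by_contra hcon
            have := hC _ hcon
            omega
          omega
        obtain ⟨n, hn⟩ := ivt (fun n => contentCount μ (-(n : ℤ) - 1)) hstep v C h0 hN
        exact ⟨-(n : ℤ) - 1, by omega, hn⟩
      · -- positive side
        have hstep : ∀ n : ℕ, contentCount μ ((n : ℤ) + 1) ≤
            contentCount μ (((n + 1 : ℕ) : ℤ) + 1) + 1 := by
          intro n
          have h := cc_stepR μ ((n : ℤ) + 1) (by omega)
          have e : ((n : ℤ) + 1) + 1 = ((n + 1 : ℕ) : ℤ) + 1 := by push_cast; ring
          rw [e] at h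
          exact h
        have h0 : v ≤ contentCount μ (((0 : ℕ) : ℤ) + 1) := by
          have h := cc_stepR μ 0 le_rfl
          have e : (0 : ℤ) + 1 = ((0 : ℕ) : ℤ) + 1 := by norm_num
          rw [e] at h
          omega
        have hN : contentCount μ (((C : ℕ) : ℤ) + 1) ≤ v := by
          have : contentCount μ (((C : ℕ) : ℤ) + 1) = 0 := by
            by_contra hcon
            have := hC _ hcon
            omega
          omega
        obtain ⟨n, hn⟩ := ivt (fun n => contentCount μ ((n : ℤ) + 1)) hstep v C h0 hN
        exact ⟨(n : ℤ) + 1, by omega, hn⟩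
  · -- InjOn
    intro μ _ ν _ h
    have hcc : ∀ a : ℤ, contentCount μ a = contentCount ν a := fun a => congrFun h a
    ext ⟨i, j⟩
    rw [YoungDiagram.mem_cells, YoungDiagram.mem_cells, mem_iff_min_lt, mem_iff_min_lt, hcc]
  · -- SurjOn
    intro x hx
    simp only [Set.mem_setOf_eq] at hx
    obtain ⟨h1, h2, h3, h4⟩ := id hx
    set C := h3.toFinset.sup Int.natAbs with hCdef
    have hCbound : ∀ a : ℤ, x a ≠ 0 → a.natAbs ≤ C := by
      intro a ha
      exact Finset.le_sup (by simpa [Set.Finite.mem_toFinset] using ha)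
    have hmax : ∀ a : ℤ, x a ≤ x 0 := by
      intro a
      rcases le_or_gt 0 a with h | h
      · exact h2 0 a le_rfl h
      · exact h1 a 0 h.le le_rfl
    set B := x 0 + C + 1 with hB
    have hbnd : ∀ i j : ℕ, min i j < x ((j : ℤ) - i) → i < B ∧ j < B := by
      intro i j h
      have h0 : x ((j : ℤ) - i) ≠ 0 := by omega
      have hc := hCbound _ h0
      have hm := hmax ((j : ℤ) - i)
      omega
    have hls : IsLowerSet (((Finset.range B ×ˢ Finset.range B).filter
        (fun u : ℕ × ℕ => min u.1 u.2 < x ((u.2 : ℤ) - u.1)) : Finset (ℕ × ℕ)) :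
        Set (ℕ × ℕ)) := by
      intro u v huv hu
      simp only [Finset.coe_filter, Set.mem_setOf_eq, Finset.mem_product,
        Finset.mem_range] at hu ⊢
      obtain ⟨⟨-, -⟩, huP⟩ := hu
      have hvP : min v.1 v.2 < x ((v.2 : ℤ) - v.1) :=
        ics_cell (x := x) hx ((u.1 - v.1) + (u.2 - v.2)) u.1 u.2 v.1 v.2 huv.1 huv.2 rfl huP
      exact ⟨⟨(hbnd _ _ hvP).1, (hbnd _ _ hvP).2⟩, hvP⟩
    refine ⟨⟨_, hls⟩, Set.mem_univ _, ?_⟩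
    set μ : YoungDiagram := ⟨_, hls⟩ with hμ
    have hmem : ∀ i j : ℕ, (i, j) ∈ μ ↔ min i j < x ((j : ℤ) - i) := by
      intro i j
      rw [hμ, YoungDiagram.mem_mk, Finset.mem_filter, Finset.mem_product,
        Finset.mem_range, Finset.mem_range]
      constructor
      · rintro ⟨-, h⟩
        exact h
      · intro h
        exact ⟨⟨(hbnd _ _ h).1, (hbnd _ _ h).2⟩, h⟩
    funext a
    show contentCount μ a = x a
    have hiff : ∀ k : ℕ, k < contentCount μ a ↔ k < x a := by
      intro k
      rcases le_or_gt 0 a with ha | ha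
      · rw [cc_lt_iff_pos μ k a ha, hmem]
        have e1 : ((k + a.toNat : ℕ) : ℤ) - (k : ℤ) = a := by push_cast; omega
        rw [e1, min_eq_left (Nat.le_add_right _ _)]
      · rw [cc_lt_iff_neg μ k a ha.le, hmem]
        have e1 : ((k : ℤ)) - ((k + (-a).toNat : ℕ) : ℤ) = a := by push_cast; omega
        rw [e1, min_eq_right (Nat.le_add_right _ _)]
    have hx1 := hiff (x a)
    have hx2 := hiff (contentCount μ a)
    omega
end

section
/- A partition λ has the property that its content multiset satisfies x_i(λ) = x_{m-i}(λ) for all integers i (where x_a(λ) counts cells with content a, and m ≥ 0 is a fixed integer) if and only if λ' is m-asymmetric, i.e., λ has Frobenius coordinates (α + m | α) for some strict partition α. -/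
lemma dc_eq_range (S : Finset ℕ) (h : ∀ i j : ℕ, i ≤ j → j ∈ S → i ∈ S) :
    S = Finset.range S.card := by
  ext k
  simp only [Finset.mem_range]
  constructor
  · intro hk
    have hsub : Finset.range (k + 1) ⊆ S := by
      intro j hj
      exact h j k (by simpa using Nat.lt_succ_iff.mp (Finset.mem_range.mp hj)) hk
    have := Finset.card_le_card hsub
    rw [Finset.card_range] at this
    omega
  · intro hk
    by_contra hkS
    have hsub : S ⊆ Finset.range k := by
      intro j hj
      rw [Finset.mem_range]
      by_contra hjk
      exact hkS (h k j (by omega) hj)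
    have := Finset.card_le_card hsub
    rw [Finset.card_range] at this
    omega

lemma seg (S : Finset ℕ) (h : ∀ i j : ℕ, i ≤ j → j ∈ S → i ∈ S) (i : ℕ) :
    i ∈ S ↔ i < S.card := by
  conv_lhs => rw [dc_eq_range S h]
  simp [Finset.mem_range]

lemma countA (μ : YoungDiagram) (t R : ℕ) (hR : ∀ i : ℕ, (i, i + t) ∈ μ → i < R) :
    contentCount μ t = ((Finset.range R).filter fun i => i + t < μ.rowLen i).card := by
  unfold contentCount
  apply Finset.card_bij (fun u _ => u.1)
  · intro u hu
    simp only [Finset.mem_filter, YoungDiagram.mem_cells] at hu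
    have h2 : u.2 = u.1 + t := by omega
    have hu' : (u.1, u.1 + t) ∈ μ := by rw [← h2]; exact hu.1
    simp only [Finset.mem_filter, Finset.mem_range]
    exact ⟨hR _ hu', YoungDiagram.mem_iff_lt_rowLen.mp hu'⟩
  · intro u hu v hv huv
    simp only [Finset.mem_filter, YoungDiagram.mem_cells] at hu hv
    have : u.2 = u.1 + t := by omega
    have : v.2 = v.1 + t := by omega
    exact Prod.ext huv (by omega)
  · intro i hi
    simp only [Finset.mem_filter, Finset.mem_range] at hi
    refine ⟨(i, i + t), ?_, rfl⟩
    simp only [Finset.mem_filter, YoungDiagram.mem_cells]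
    exact ⟨YoungDiagram.mem_iff_lt_rowLen.mpr hi.2, by push_cast; ring⟩

lemma countB (μ : YoungDiagram) (t R : ℕ) (hR : ∀ i : ℕ, (i + t, i) ∈ μ → i < R) :
    contentCount μ (-(t : ℤ)) = ((Finset.range R).filter fun i => i + t < μ.colLen i).card := by
  unfold contentCount
  apply Finset.card_bij (fun u _ => u.2)
  · intro u hu
    simp only [Finset.mem_filter, YoungDiagram.mem_cells] at hu
    have h1 : u.1 = u.2 + t := by omega
    have hu' : (u.2 + t, u.2) ∈ μ := by rw [← h1]; exact hu.1
    simp only [Finset.mem_filter, Finset.mem_range]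
    exact ⟨hR _ hu', YoungDiagram.mem_iff_lt_colLen.mp hu'⟩
  · intro u hu v hv huv
    simp only [Finset.mem_filter, YoungDiagram.mem_cells] at hu hv
    have : u.1 = u.2 + t := by omega
    have : v.1 = v.2 + t := by omega
    exact Prod.ext (by omega) huv
  · intro i hi
    simp only [Finset.mem_filter, Finset.mem_range] at hi
    refine ⟨(i + t, i), ?_, rfl⟩
    simp only [Finset.mem_filter, YoungDiagram.mem_cells]
    exact ⟨YoungDiagram.mem_iff_lt_colLen.mpr hi.2, by push_cast; ring⟩

/-- For a fixed m ≥ 0, a partition λ satisfies x_i(λ) = x_{m-i}(λ) for all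
integers i if and only if λ' is m-asymmetric, i.e. λ has Frobenius coordinates
(α + m | α) for some strict partition α (expressed 0-indexed: there are r and a strictly
decreasing α with `(i,i) ∈ μ ↔ i < r`, `μ.rowLen i = (α i + m) + i + 1` and
`μ.colLen i = α i + i + 1` for `i < r`). -/
theorem contentCount_symm_iff_conj_asymmetric (μ : YoungDiagram) (m : ℕ) :
    (∀ i : ℤ, contentCount μ i = contentCount μ ((m : ℤ) - i)) ↔
    ∃ (r : ℕ) (α : ℕ → ℕ), (∀ ⦃i j : ℕ⦄, i < j → j < r → α j < α i) ∧
      (∀ i : ℕ, (i, i) ∈ μ ↔ i < r) ∧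
      ∀ i < r, μ.rowLen i = (α i + m) + i + 1 ∧ μ.colLen i = α i + i + 1 := by
  constructor
  · intro H
    have hex : ∃ n : ℕ, (n, n) ∉ μ := by
      refine ⟨μ.colLen 0, fun hmem => ?_⟩
      have := YoungDiagram.mem_iff_lt_colLen.mp (μ.up_left_mem le_rfl (Nat.zero_le _) hmem)
      omega
    set r := Nat.find hex with hr
    have hdiag : ∀ i : ℕ, (i, i) ∈ μ ↔ i < r := by
      intro i
      constructor
      · intro h
        by_contra h'
        push_neg at h'
        exact Nat.find_spec hex (μ.up_left_mem h' h' h)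
      · intro h
        have := Nat.find_min hex h
        simpa using this
    have hA : ∀ t : ℕ, contentCount μ t
        = ((Finset.range r).filter fun i => i + t < μ.rowLen i).card := by
      intro t
      exact countA μ t r (fun i h => (hdiag i).mp (μ.up_left_mem le_rfl (by omega) h))
    have hB : ∀ t : ℕ, contentCount μ (-(t : ℤ))
        = ((Finset.range r).filter fun i => i + t < μ.colLen i).card := by
      intro t
      exact countB μ t r (fun i h => (hdiag i).mp (μ.up_left_mem (by omega) le_rfl h))
    have hrowseg : ∀ t i : ℕ, i < r → (i + t < μ.rowLen i ↔
        i < ((Finset.range r).filter fun i => i + t < μ.rowLen i).card) := by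
      intro t i hi
      have hdc : ∀ a b : ℕ, a ≤ b →
          b ∈ (Finset.range r).filter (fun i => i + t < μ.rowLen i) →
          a ∈ (Finset.range r).filter (fun i => i + t < μ.rowLen i) := by
        intro a b hab hb
        simp only [Finset.mem_filter, Finset.mem_range] at hb ⊢
        have := μ.rowLen_anti a b hab
        exact ⟨by omega, by omega⟩
      have hs := seg _ hdc i
      simp only [Finset.mem_filter, Finset.mem_range] at hs
      tauto
    have hcolseg : ∀ t i : ℕ, i < r → (i + t < μ.colLen i ↔
        i < ((Finset.range r).filter fun i => i + t < μ.colLen i).card) := by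
      intro t i hi
      have hdc : ∀ a b : ℕ, a ≤ b →
          b ∈ (Finset.range r).filter (fun i => i + t < μ.colLen i) →
          a ∈ (Finset.range r).filter (fun i => i + t < μ.colLen i) := by
        intro a b hab hb
        simp only [Finset.mem_filter, Finset.mem_range] at hb ⊢
        have := μ.colLen_anti a b hab
        exact ⟨by omega, by omega⟩
      have hs := seg _ hdc i
      simp only [Finset.mem_filter, Finset.mem_range] at hs
      tauto
    have hkey : ∀ t : ℕ, ∀ i < r, (i + (m + t) < μ.rowLen i ↔ i + t < μ.colLen i) := by
      intro t i hi
      have h1 := hrowseg (m + t) i hi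
      have h2 := hcolseg t i hi
      have hH := H (-(t : ℤ))
      have hcast : (m : ℤ) - -(t : ℤ) = ((m + t : ℕ) : ℤ) := by push_cast; ring
      rw [hcast, hA (m + t), hB t] at hH
      omega
    have hmain : ∀ i < r, μ.rowLen i = μ.colLen i + m := by
      intro i hi
      have hc : i < μ.colLen i := YoungDiagram.mem_iff_lt_colLen.mp ((hdiag i).mpr hi)
      have h1 := hkey (μ.colLen i - i) i hi
      have h2 := hkey (μ.colLen i - i - 1) i hi
      omega
    refine ⟨r, fun i => μ.colLen i - i - 1, ?_, hdiag, ?_⟩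
    · intro i j hij hjr
      have h1 : i < μ.colLen i := YoungDiagram.mem_iff_lt_colLen.mp ((hdiag i).mpr (by omega))
      have h2 : j < μ.colLen j := YoungDiagram.mem_iff_lt_colLen.mp ((hdiag j).mpr hjr)
      have h3 := μ.colLen_anti i j (le_of_lt hij)
      simp only []
      omega
    · intro i hi
      have hc : i < μ.colLen i := YoungDiagram.mem_iff_lt_colLen.mp ((hdiag i).mpr hi)
      have := hmain i hi
      refine ⟨?_, ?_⟩
      · show μ.rowLen i = (μ.colLen i - i - 1 + m) + i + 1
        omega
      · show μ.colLen i = μ.colLen i - i - 1 + i + 1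
        omega
  · rintro ⟨r, α, hα, hdiag, hlen⟩
    intro z
    have hrc : ∀ i < r, μ.rowLen i = μ.colLen i + m := by
      intro i hi
      have := hlen i hi
      omega
    have hcl : ∀ i < r, i < μ.colLen i :=
      fun i hi => YoungDiagram.mem_iff_lt_colLen.mp ((hdiag i).mpr hi)
    have hA : ∀ t : ℕ, contentCount μ t
        = ((Finset.range r).filter fun i => i + t < μ.rowLen i).card := by
      intro t
      exact countA μ t r (fun i h => (hdiag i).mp (μ.up_left_mem le_rfl (by omega) h))
    have hB : ∀ t : ℕ, contentCount μ (-(t : ℤ))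
        = ((Finset.range r).filter fun i => i + t < μ.colLen i).card := by
      intro t
      exact countB μ t r (fun i h => (hdiag i).mp (μ.up_left_mem (by omega) le_rfl h))
    have hflat : ∀ t ≤ m, contentCount μ t = r := by
      intro t ht
      rw [hA t]
      have hfil : (Finset.range r).filter (fun i => i + t < μ.rowLen i) = Finset.range r := by
        apply Finset.filter_true_of_mem
        intro i hi
        rw [Finset.mem_range] at hi
        have := hrc i hi
        have := hcl i hi
        omega
      rw [hfil, Finset.card_range]
    have hswap : ∀ t : ℕ, contentCount μ ((m + t : ℕ) : ℤ) = contentCount μ (-(t : ℤ)) := by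
      intro t
      rw [hA (m + t), hB t]
      congr 1
      apply Finset.filter_congr
      intro i hi
      rw [Finset.mem_range] at hi
      have := hrc i hi
      constructor <;> intro h <;> simp_all <;> omega
    rcases le_or_gt 0 z with hz0 | hz0
    · rcases le_or_gt z m with hzm | hzm
      · lift z to ℕ using hz0 with t
        have htm : t ≤ m := by exact_mod_cast hzm
        have hm : (m : ℤ) - t = ((m - t : ℕ) : ℤ) := by push_cast; omega
        rw [hm, hflat t htm, hflat (m - t) (by omega)]
      · obtain ⟨t, h1, h2⟩ : ∃ t : ℕ, z = ((m + t : ℕ) : ℤ) ∧ (m : ℤ) - z = -(t : ℤ) :=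
          ⟨(z - m).toNat, by push_cast; omega, by omega⟩
        rw [h2, h1]
        exact hswap _
    · obtain ⟨t, h1, h2⟩ : ∃ t : ℕ, z = -(t : ℤ) ∧ (m : ℤ) - z = ((m + t : ℕ) : ℤ) :=
          ⟨(-z).toNat, by omega, by push_cast; omega⟩
      rw [h2, h1]
      exact (hswap _).symm
end

section
/- Let λ be a partition of length at most n and m ≥ 0 an integer, with Frobenius coordinates (α|β). Write λ^(m) for the partition with Frobenius coordinates (α+m | β) and λ_(m) for the partition with Frobenius coordinates (α | β+m). Then for every integer a, the number of cells of λ^(m) with content a equals the number of cells of λ_(m) with content a - m. -/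
private lemma memRowAux {μ : YoungDiagram} {r : ℕ} {α : ℕ → ℕ}
    (hr : ∀ i : ℕ, (i, i) ∈ μ ↔ i < r)
    (hα : ∀ i < r, μ.rowLen i = α i + i + 1)
    (i d : ℕ) : (i, i + d) ∈ μ ↔ i < r ∧ d ≤ α i := by
  constructor
  · intro h
    have hii : (i, i) ∈ μ := μ.up_left_mem le_rfl (Nat.le_add_right i d) h
    have hir : i < r := (hr i).mp hii
    refine ⟨hir, ?_⟩
    have h2 := (YoungDiagram.mem_iff_lt_rowLen).mp h
    rw [hα i hir] at h2; omega
  · rintro ⟨hir, hd⟩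
    rw [YoungDiagram.mem_iff_lt_rowLen, hα i hir]; omega

private lemma memColAux {μ : YoungDiagram} {r : ℕ} {β : ℕ → ℕ}
    (hr : ∀ i : ℕ, (i, i) ∈ μ ↔ i < r)
    (hβ : ∀ i < r, μ.colLen i = β i + i + 1)
    (i d : ℕ) : (i + d, i) ∈ μ ↔ i < r ∧ d ≤ β i := by
  constructor
  · intro h
    have hii : (i, i) ∈ μ := μ.up_left_mem (Nat.le_add_right i d) le_rfl h
    have hir : i < r := (hr i).mp hii
    refine ⟨hir, ?_⟩
    have h2 := (YoungDiagram.mem_iff_lt_colLen).mp h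
    rw [hβ i hir] at h2; omega
  · rintro ⟨hir, hd⟩
    rw [YoungDiagram.mem_iff_lt_colLen, hβ i hir]; omega

private lemma ccPos {μ : YoungDiagram} {r : ℕ} {α : ℕ → ℕ}
    (hr : ∀ i : ℕ, (i, i) ∈ μ ↔ i < r)
    (hα : ∀ i < r, μ.rowLen i = α i + i + 1)
    (a : ℤ) (ha : 0 ≤ a) :
    contentCount μ a = ((Finset.range r).filter fun i => a ≤ (α i : ℤ)).card := by
  unfold contentCount
  apply Finset.card_bij' (fun u _ => u.1) (fun i _ => (i, i + a.toNat))
  · intro u hu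
    simp only [Finset.mem_filter, YoungDiagram.mem_cells] at hu
    obtain ⟨hmem, hc⟩ := hu
    have hu2 : u.2 = u.1 + a.toNat := by omega
    have := (memRowAux hr hα u.1 a.toNat).mp (by rw [← hu2]; exact hmem)
    simp only [Finset.mem_filter, Finset.mem_range]
    refine ⟨this.1, ?_⟩
    have := this.2; omega
  · intro i hi
    simp only [Finset.mem_filter, Finset.mem_range] at hi
    simp only [Finset.mem_filter, YoungDiagram.mem_cells]
    refine ⟨(memRowAux hr hα i a.toNat).mpr ⟨hi.1, by omega⟩, by push_cast; omega⟩
  · intro u hu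
    simp only [Finset.mem_filter, YoungDiagram.mem_cells] at hu
    have : u.2 = u.1 + a.toNat := by omega
    exact Prod.ext rfl this.symm
  · intro i hi
    rfl

private lemma ccNeg {μ : YoungDiagram} {r : ℕ} {β : ℕ → ℕ}
    (hr : ∀ i : ℕ, (i, i) ∈ μ ↔ i < r)
    (hβ : ∀ i < r, μ.colLen i = β i + i + 1)
    (a : ℤ) (ha : a ≤ 0) :
    contentCount μ a = ((Finset.range r).filter fun i => -a ≤ (β i : ℤ)).card := by
  unfold contentCount
  apply Finset.card_bij' (fun u _ => u.2) (fun i _ => (i + (-a).toNat, i))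
  · intro u hu
    simp only [Finset.mem_filter, YoungDiagram.mem_cells] at hu
    obtain ⟨hmem, hc⟩ := hu
    have hu1 : u.1 = u.2 + (-a).toNat := by omega
    have := (memColAux hr hβ u.2 (-a).toNat).mp (by rw [← hu1]; exact hmem)
    simp only [Finset.mem_filter, Finset.mem_range]
    refine ⟨this.1, ?_⟩
    have := this.2; omega
  · intro i hi
    simp only [Finset.mem_filter, Finset.mem_range] at hi
    simp only [Finset.mem_filter, YoungDiagram.mem_cells]
    refine ⟨(memColAux hr hβ i (-a).toNat).mpr ⟨hi.1, by omega⟩, by push_cast; omega⟩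
  · intro u hu
    simp only [Finset.mem_filter, YoungDiagram.mem_cells] at hu
    have : u.1 = u.2 + (-a).toNat := by omega
    exact Prod.ext this.symm rfl
  · intro i hi
    rfl

/-- Let λ = (α|β) be a partition of length at most n and m ≥ 0.  Let
λ^(m) = (α+m | β) and λ_(m) = (α | β+m) (Frobenius coordinates, expressed 0-indexed as
in the hypotheses below).  Then for every integer a, the number of cells of λ^(m) with
content a equals the number of cells of λ_(m) with content a - m. -/
theorem contentCount_shift (n m r : ℕ) (α β : ℕ → ℕ) (μ μ₁ μ₂ : YoungDiagram)
    (hlen : μ.colLen 0 ≤ n)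
    (hr : ∀ i : ℕ, (i, i) ∈ μ ↔ i < r)
    (hα : ∀ i < r, μ.rowLen i = α i + i + 1)
    (hβ : ∀ i < r, μ.colLen i = β i + i + 1)
    (hr₁ : ∀ i : ℕ, (i, i) ∈ μ₁ ↔ i < r)
    (hα₁ : ∀ i < r, μ₁.rowLen i = (α i + m) + i + 1)
    (hβ₁ : ∀ i < r, μ₁.colLen i = β i + i + 1)
    (hr₂ : ∀ i : ℕ, (i, i) ∈ μ₂ ↔ i < r)
    (hα₂ : ∀ i < r, μ₂.rowLen i = α i + i + 1)
    (hβ₂ : ∀ i < r, μ₂.colLen i = (β i + m) + i + 1) :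
    ∀ a : ℤ, contentCount μ₁ a = contentCount μ₂ (a - m) := by
  intro a
  rcases le_or_gt 0 a with ha | ha
  · rw [ccPos hr₁ hα₁ a ha]
    rcases le_or_gt (m : ℤ) a with ham | ham
    · rw [ccPos hr₂ hα₂ (a - m) (by omega)]
      congr 1
      apply Finset.filter_congr
      intro i _
      push_cast
      omega
    · rw [ccNeg hr₂ hβ₂ (a - m) (by omega)]
      congr 1
      apply Finset.filter_congr
      intro i _
      push_cast
      omega
  · rw [ccNeg hr₁ hβ₁ a (by omega), ccNeg hr₂ hβ₂ (a - m) (by omega)]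
    congr 1
    apply Finset.filter_congr
    intro i _
    push_cast
    omega
end

section
/- For any partition μ and any positive integer n ≥ ℓ(μ), the number of content tabloids of shape μ with entries bounded by n equals Π_{u ∈ μ} (n + c(u)), the product over all cells u of μ of n plus the content of u. -/
/-! The constraints on different cells are independent, so the count is the product of the
interval lengths `n + c(u)`. These are nonnegative because every cell lies in a row
`i < ℓ(μ) ≤ n`, which lets `Int.toNat` commute with the product. -/

theorem Int.prod_toNat_of_nonneg {ι : Type*} {s : Finset ι} {f : ι → ℤ}
    (hf : ∀ i ∈ s, 0 ≤ f i) : ∏ i ∈ s, (f i).toNat = (∏ i ∈ s, f i).toNat := by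
  rw [← Int.toNat_natCast (∏ i ∈ s, (f i).toNat)]
  push_cast
  rw [Finset.prod_congr rfl fun i hi => Int.toNat_of_nonneg (hf i hi)]

theorem Int.card_pi_Icc {ι : Type*} [Fintype ι] (a b : ι → ℤ) :
    Nat.card {f : ι → ℤ // ∀ i, a i ≤ f i ∧ f i ≤ b i} = ∏ i, (b i + 1 - a i).toNat := by
  rw [Nat.card_congr (Equiv.subtypePiEquivPi (p := fun i z => a i ≤ z ∧ z ≤ b i)),
    Nat.card_pi]
  refine Finset.prod_congr rfl fun i _ => ?_
  rw [← Int.card_Icc, ← Fintype.card_Icc]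
  exact Nat.card_eq_fintype_card (α := Set.Icc (a i) (b i))

theorem YoungDiagram.fst_lt_colLen_zero {μ : YoungDiagram} {u : ℕ × ℕ} (hu : u ∈ μ) :
    u.1 < μ.colLen 0 :=
  mem_iff_lt_colLen.mp (μ.up_left_mem le_rfl (Nat.zero_le _) hu)

theorem card_contentTabloids_general (μ : YoungDiagram) (n : ℕ)
    (hlen : μ.colLen 0 ≤ n) :
    Nat.card {T : ↥μ.cells → ℤ //
        ∀ u : ↥μ.cells, 1 - ((u.1.2 : ℤ) - (u.1.1 : ℤ)) ≤ T u ∧ T u ≤ (n : ℤ)} =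
      (∏ u ∈ μ.cells, ((n : ℤ) + ((u.2 : ℤ) - (u.1 : ℤ)))).toNat := by
  have hfactor : ∀ u ∈ μ.cells, 0 ≤ (n : ℤ) + ((u.2 : ℤ) - (u.1 : ℤ)) := fun u hu => by
    have := μ.fst_lt_colLen_zero hu
    omega
  rw [Int.card_pi_Icc, ← Int.prod_toNat_of_nonneg hfactor,
    ← Finset.prod_coe_sort μ.cells]
  refine Finset.prod_congr rfl fun u _ => ?_
  ring_nf

/-- For any partition μ and any positive integer n ≥ ℓ(μ) (the number of
nonzero parts, i.e. `μ.colLen 0`), the number of content tabloids of shape μ with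
entries bounded by n equals Π_{u ∈ μ} (n + c(u)). -/
theorem card_contentTabloids (μ : YoungDiagram) (n : ℕ) (hn : 0 < n)
    (hlen : μ.colLen 0 ≤ n) :
    Nat.card {T : ↥μ.cells → ℤ //
        ∀ u : ↥μ.cells, 1 - ((u.1.2 : ℤ) - (u.1.1 : ℤ)) ≤ T u ∧ T u ≤ (n : ℤ)} =
      (∏ u ∈ μ.cells, ((n : ℤ) + ((u.2 : ℤ) - (u.1 : ℤ)))).toNat :=
  card_contentTabloids_general μ n hlen
end

section
/- Let (α|β) be a partition of length at most p and with first part at most q, and let m ≥ 0. Then dim F^(p)_{(α+m|β)} · dim F^(q)_{(β+m|α)} = dim F^(p+m)_{(α|β+m)} · dim F^(q+m)_{(β|α+m)}, where dim F^(n)_π = Π_{u ∈ π} (n + c(u)) / h(u) is the dimension of the irreducible gl_n-module with highest weight π (equivalently, the number of semistandard Young tableaux of shape π with entries at most n). -/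
/-!
Transposition preserves hook lengths, and `(α | β + m)`, `(β | α + m)` are the transposes of
`(β + m | α)`, `(α + m | β)`, so the hook-length denominators on the two sides agree.
Grouping cells by diagonal hooks, the `i`-th hook of `(a | b)` carries the contents
`-b i, …, a i`. Passing from `(α + m | β)` to `(α | β + m)` shifts these contents down by `m`,
which raising `n` from `p` to `p + m` exactly compensates; so the content products agree too.
-/

open Finset

namespace YoungDiagram

def content (u : ℕ × ℕ) : ℤ := (u.2 : ℤ) - u.1

def hookLength (ν : YoungDiagram) (u : ℕ × ℕ) : ℕ :=
  ν.rowLen u.1 + ν.colLen u.2 - u.1 - u.2 - 1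

/-- `ν = (a | b)` in Frobenius coordinates: `ν` has `r` diagonal cells, the `i`-th with arm
`a i` and leg `b i`. -/
structure HasFrobenius (ν : YoungDiagram) (r : ℕ) (a b : ℕ → ℕ) : Prop where
  diag_mem_iff : ∀ i, (i, i) ∈ ν ↔ i < r
  rowLen_eq : ∀ i < r, ν.rowLen i = a i + i + 1
  colLen_eq : ∀ i < r, ν.colLen i = b i + i + 1

namespace HasFrobenius

variable {ν ν' : YoungDiagram} {r : ℕ} {a b : ℕ → ℕ}

theorem transpose (h : HasFrobenius ν r a b) : HasFrobenius ν.transpose r b a where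
  diag_mem_iff i := by simpa using h.diag_mem_iff i
  rowLen_eq i hi := by rw [rowLen_transpose, h.colLen_eq i hi]
  colLen_eq i hi := by rw [colLen_transpose, h.rowLen_eq i hi]

theorem min_lt (h : HasFrobenius ν r a b) {u : ℕ × ℕ} (hu : u ∈ ν) : min u.1 u.2 < r :=
  (h.diag_mem_iff _).mp (ν.up_left_mem (min_le_left _ _) (min_le_right _ _) hu)

theorem mem_iff (h : HasFrobenius ν r a b) {i j : ℕ} :
    (i, j) ∈ ν ↔ min i j < r ∧ j ≤ a (min i j) + min i j ∧ i ≤ b (min i j) + min i j := by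
  rcases le_or_gt i j with hij | hij
  · rw [min_eq_left hij, mem_iff_lt_rowLen]
    refine ⟨fun hj => ?_, fun ⟨hi, hj, _⟩ => ?_⟩
    · have hi := h.min_lt (mem_iff_lt_rowLen.mpr hj)
      rw [min_eq_left hij] at hi
      rw [h.rowLen_eq i hi] at hj
      omega
    · rw [h.rowLen_eq i hi]
      omega
  · rw [min_eq_right hij.le, mem_iff_lt_colLen]
    refine ⟨fun hi => ?_, fun ⟨hj, _, hi⟩ => ?_⟩
    · have hj := h.min_lt (mem_iff_lt_colLen.mpr hi)
      rw [min_eq_right hij.le] at hj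
      rw [h.colLen_eq j hj] at hi
      omega
    · rw [h.colLen_eq j hj]
      omega

theorem unique (h : HasFrobenius ν r a b) (h' : HasFrobenius ν' r a b) : ν = ν' :=
  SetLike.ext fun _ => by rw [h.mem_iff, h'.mem_iff]

/-- Cells are grouped by the diagonal hook `min u.1 u.2` they lie in. -/
theorem prod_content {M : Type*} [CommMonoid M] (h : HasFrobenius ν r a b) (f : ℤ → M) :
    ∏ u ∈ ν.cells, f (content u) = ∏ i ∈ range r, ∏ k ∈ Ico (-(b i : ℤ)) (a i + 1), f k := by
  rw [← prod_fiberwise_of_maps_to (g := fun u => min u.1 u.2)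
    fun u hu => mem_range.mpr (h.min_lt hu)]
  refine prod_congr rfl fun i hi => ?_
  have hi := mem_range.mp hi
  refine prod_nbij' content (fun k => (i + (-k).toNat, i + k.toNat)) ?_ ?_ ?_ ?_ fun _ _ => rfl
  · rintro ⟨x, y⟩ hu
    simp only [mem_filter, mem_cells, h.mem_iff] at hu
    obtain ⟨hu, hxy⟩ := hu
    rw [hxy] at hu
    simp only [content, mem_Ico]
    omega
  · intro k hk
    have hmin : min (i + (-k).toNat) (i + k.toNat) = i := by omega
    simp only [mem_Ico] at hk
    simp only [mem_filter, mem_cells, h.mem_iff, hmin, and_true]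
    omega
  · rintro ⟨x, y⟩ hu
    simp only [mem_filter, mem_cells] at hu
    simp only [content, Prod.mk.injEq]
    omega
  · intro k _
    simp only [content]
    omega

theorem prod_content_shift {M : Type*} [CommMonoid M] {m : ℕ}
    (h : HasFrobenius ν r (fun i => a i + m) b) (h' : HasFrobenius ν' r a (fun i => b i + m))
    (f : ℤ → M) :
    ∏ u ∈ ν.cells, f (content u) = ∏ u ∈ ν'.cells, f (content u + m) := by
  rw [h.prod_content, h'.prod_content (fun k => f (k + m))]
  refine prod_congr rfl fun i _ => ?_
  rw [prod_Ico_add']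
  congr 2 <;> push_cast <;> ring

end HasFrobenius

theorem prod_hookLength_transpose {M : Type*} [CommMonoid M] (ν : YoungDiagram) (f : ℕ → M) :
    ∏ u ∈ ν.transpose.cells, f (ν.transpose.hookLength u) = ∏ u ∈ ν.cells, f (ν.hookLength u) := by
  rw [show ν.transpose.cells = ν.cells.map (Equiv.prodComm ℕ ℕ).toEmbedding from rfl, prod_map]
  refine prod_congr rfl fun u _ => congrArg f ?_
  simp only [hookLength, Equiv.coe_toEmbedding, Equiv.prodComm_apply, Prod.fst_swap,
    Prod.snd_swap, rowLen_transpose, colLen_transpose]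
  omega

end YoungDiagram

/-- The dimension of the irreducible gl_N-module with highest weight the partition μ,
given by the hook content formula: Π_{u ∈ μ} (N + c(u)) / h(u). -/
noncomputable def dimF (N : ℕ) (μ : YoungDiagram) : ℚ :=
  ∏ u ∈ μ.cells,
    ((N : ℚ) + ((u.2 : ℚ) - (u.1 : ℚ))) /
      ((μ.rowLen u.1 + μ.colLen u.2 - u.1 - u.2 - 1 : ℕ) : ℚ)

open YoungDiagram

theorem dimF_eq_div (N : ℕ) (ν : YoungDiagram) :
    dimF N ν =
      (∏ u ∈ ν.cells, ((N + content u : ℤ) : ℚ)) / ∏ u ∈ ν.cells, (ν.hookLength u : ℚ) := by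
  rw [dimF, prod_div_distrib]
  simp [content, hookLength]

theorem dim_product_identity_general (p q m r : ℕ) (α β : ℕ → ℕ)
    (μ₁ μ₂ μ₃ μ₄ : YoungDiagram)
    (hr₁ : ∀ i : ℕ, (i, i) ∈ μ₁ ↔ i < r)
    (hα₁ : ∀ i < r, μ₁.rowLen i = (α i + m) + i + 1)
    (hβ₁ : ∀ i < r, μ₁.colLen i = β i + i + 1)
    (hr₂ : ∀ i : ℕ, (i, i) ∈ μ₂ ↔ i < r)
    (hα₂ : ∀ i < r, μ₂.rowLen i = (β i + m) + i + 1)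
    (hβ₂ : ∀ i < r, μ₂.colLen i = α i + i + 1)
    (hr₃ : ∀ i : ℕ, (i, i) ∈ μ₃ ↔ i < r)
    (hα₃ : ∀ i < r, μ₃.rowLen i = α i + i + 1)
    (hβ₃ : ∀ i < r, μ₃.colLen i = (β i + m) + i + 1)
    (hr₄ : ∀ i : ℕ, (i, i) ∈ μ₄ ↔ i < r)
    (hα₄ : ∀ i < r, μ₄.rowLen i = β i + i + 1)
    (hβ₄ : ∀ i < r, μ₄.colLen i = (α i + m) + i + 1) :
    dimF p μ₁ * dimF q μ₂ = dimF (p + m) μ₃ * dimF (q + m) μ₄ := by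
  have h₁ : HasFrobenius μ₁ r (fun i => α i + m) β := ⟨hr₁, hα₁, hβ₁⟩
  have h₂ : HasFrobenius μ₂ r (fun i => β i + m) α := ⟨hr₂, hα₂, hβ₂⟩
  have h₃ : HasFrobenius μ₃ r α (fun i => β i + m) := ⟨hr₃, hα₃, hβ₃⟩
  have h₄ : HasFrobenius μ₄ r β (fun i => α i + m) := ⟨hr₄, hα₄, hβ₄⟩
  have hc₁ := h₁.prod_content_shift h₃ fun k => ((p + k : ℤ) : ℚ)
  have hc₂ := h₂.prod_content_shift h₄ fun k => ((q + k : ℤ) : ℚ)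
  rw [dimF_eq_div, dimF_eq_div, dimF_eq_div, dimF_eq_div, hc₁, hc₂, h₃.unique h₂.transpose,
    h₄.unique h₁.transpose, prod_hookLength_transpose, prod_hookLength_transpose]
  push_cast [add_assoc, add_comm (m : ℚ)]
  ring

/-- Let λ = (α|β) be a partition of length at most p with first part at
most q, and m ≥ 0.  With μ₁ = (α+m|β), μ₂ = (β+m|α), μ₃ = (α|β+m), μ₄ = (β|α+m)
(Frobenius coordinates, 0-indexed as in the hypotheses), we have
dim F^(p)_{(α+m|β)} · dim F^(q)_{(β+m|α)} = dim F^(p+m)_{(α|β+m)} · dim F^(q+m)_{(β|α+m)}. -/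
theorem dim_product_identity (p q m r : ℕ) (α β : ℕ → ℕ)
    (μ μ₁ μ₂ μ₃ μ₄ : YoungDiagram)
    (hlen : μ.colLen 0 ≤ p) (hwidth : μ.rowLen 0 ≤ q)
    (hr : ∀ i : ℕ, (i, i) ∈ μ ↔ i < r)
    (hα : ∀ i < r, μ.rowLen i = α i + i + 1)
    (hβ : ∀ i < r, μ.colLen i = β i + i + 1)
    (hr₁ : ∀ i : ℕ, (i, i) ∈ μ₁ ↔ i < r)
    (hα₁ : ∀ i < r, μ₁.rowLen i = (α i + m) + i + 1)
    (hβ₁ : ∀ i < r, μ₁.colLen i = β i + i + 1)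
    (hr₂ : ∀ i : ℕ, (i, i) ∈ μ₂ ↔ i < r)
    (hα₂ : ∀ i < r, μ₂.rowLen i = (β i + m) + i + 1)
    (hβ₂ : ∀ i < r, μ₂.colLen i = α i + i + 1)
    (hr₃ : ∀ i : ℕ, (i, i) ∈ μ₃ ↔ i < r)
    (hα₃ : ∀ i < r, μ₃.rowLen i = α i + i + 1)
    (hβ₃ : ∀ i < r, μ₃.colLen i = (β i + m) + i + 1)
    (hr₄ : ∀ i : ℕ, (i, i) ∈ μ₄ ↔ i < r)
    (hα₄ : ∀ i < r, μ₄.rowLen i = β i + i + 1)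
    (hβ₄ : ∀ i < r, μ₄.colLen i = (α i + m) + i + 1) :
    dimF p μ₁ * dimF q μ₂ = dimF (p + m) μ₃ * dimF (q + m) μ₄ :=
  dim_product_identity_general p q m r α β μ₁ μ₂ μ₃ μ₄ hr₁ hα₁ hβ₁ hr₂ hα₂ hβ₂ hr₃ hα₃ hβ₃ hr₄ hα₄
    hβ₄
end

section
/- Let m, n ≥ 0 and let λ be an m-asymmetric partition of length at most m+n. Then Π_{u∈λ} [m+n+c(u)]_q = Π_{u∈λ'} [n+c(u)]_q, where [a]_q = 1 + q + ... + q^{a-1} is the q-integer, c(u) the content of cell u, and λ' the conjugate. -/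
open Polynomial

/-- The q-integer [a] = 1 + q + ... + q^(a-1), as a polynomial in q. -/
noncomputable def qint (a : ℕ) : Polynomial ℤ :=
  ∑ i ∈ Finset.range a, X ^ i

/-!
In an `m`-asymmetric diagram the leg of each principal hook is `m` cells longer than its arm.
Matching the arm (diagonal cell included) with the last cells of the leg and reversing the
remaining `m - 1` leg cells gives an involution of the cells that sends content `c` to `-c - m`. Hence the contents `m + c(u)`,
`u ∈ λ`, are the contents `-c(u)`, `u ∈ λ`, i.e. the contents of `λ'`, and any function of
the content has the same product over both.
-/

namespace YoungDiagram

theorem prod_transpose_cells {M : Type*} [CommMonoid M] (μ : YoungDiagram) (f : ℕ × ℕ → M) :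
    ∏ u ∈ μ.transpose.cells, f u = ∏ u ∈ μ.cells, f u.swap := by
  simp [transpose, Finset.prod_map]

def cellContent (u : ℕ × ℕ) : ℤ := (u.2 : ℤ) - u.1

/-- Inside the principal hook of `(k, k)`: the arm cell `(k, k + a)` and the leg cell
`(k + a + m, k)` are exchanged, and the leg cells `(k + a, k)`, `0 < a < m`, are reversed. -/
def hookFlip (m : ℕ) (u : ℕ × ℕ) : ℕ × ℕ :=
  if u.1 ≤ u.2 then (u.2 + m, u.1)
  else if u.2 + m ≤ u.1 then (u.2, u.1 - m)
  else (u.2 + (u.2 + m - u.1), u.2)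

theorem hookFlip_involutive (m : ℕ) : Function.Involutive (hookFlip m) := by
  rintro ⟨i, j⟩
  simp only [hookFlip]
  split_ifs <;> simp_all <;> omega

theorem cellContent_hookFlip (m : ℕ) (u : ℕ × ℕ) :
    cellContent (hookFlip m u) = -cellContent u - m := by
  obtain ⟨i, j⟩ := u
  simp only [YoungDiagram.cellContent, hookFlip]
  split_ifs <;> push_cast <;> omega

theorem IsAsymmetric.hookFlip_mem {m : ℕ} {μ : YoungDiagram} (hμ : μ.IsAsymmetric m)
    {u : ℕ × ℕ} (hu : u ∈ μ) : hookFlip m u ∈ μ := by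
  obtain ⟨i, j⟩ := u
  simp only [hookFlip]
  split_ifs with hij hji
  · have hlen := hμ i (μ.up_left_mem le_rfl hij hu)
    rw [mem_iff_lt_rowLen] at hu
    rw [mem_iff_lt_colLen, hlen]
    omega
  · have hlen := hμ j (μ.up_left_mem (by omega) le_rfl hu)
    rw [mem_iff_lt_colLen, hlen] at hu
    rw [mem_iff_lt_rowLen]
    omega
  · have hdiag : (j, j) ∈ μ := μ.up_left_mem (by omega) le_rfl hu
    have hlen := hμ j hdiag
    rw [mem_iff_lt_rowLen] at hdiag
    rw [mem_iff_lt_colLen, hlen]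
    omega

theorem IsAsymmetric.prod_cellContent_add {M : Type*} [CommMonoid M] {m : ℕ}
    {μ : YoungDiagram} (hμ : μ.IsAsymmetric m) (f : ℤ → M) :
    ∏ u ∈ μ.cells, f (cellContent u + m) = ∏ u ∈ μ.cells, f (-cellContent u) := by
  have hmem : ∀ u ∈ μ.cells, hookFlip m u ∈ μ.cells := fun u hu ↦ by
    simpa using hμ.hookFlip_mem ((μ.mem_cells u).mp hu)
  refine Finset.prod_nbij' (hookFlip m) (hookFlip m) hmem hmem
    (fun u _ ↦ hookFlip_involutive m u) (fun u _ ↦ hookFlip_involutive m u) fun u _ ↦ ?_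
  rw [cellContent_hookFlip]
  ring_nf

end YoungDiagram

theorem prod_qint_content_eq_conj_general (m n : ℕ) (μ : YoungDiagram)
    (hasym : μ.IsAsymmetric m) :
    ∏ u ∈ μ.cells, qint (((m : ℤ) + (n : ℤ) + ((u.2 : ℤ) - (u.1 : ℤ))).toNat) =
      ∏ u ∈ μ.transpose.cells, qint (((n : ℤ) + ((u.2 : ℤ) - (u.1 : ℤ))).toNat) := by
  rw [YoungDiagram.prod_transpose_cells]
  convert hasym.prod_cellContent_add fun c ↦ qint ((n + c).toNat) using 4 with u <;>
    simp only [YoungDiagram.cellContent, Prod.fst_swap, Prod.snd_swap] <;> ring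

/-- Let m, n ≥ 0 and λ an m-asymmetric partition of length at most m+n.
Then Π_{u∈λ} [m+n+c(u)]_q = Π_{u∈λ'} [n+c(u)]_q as polynomials in q. -/
theorem prod_qint_content_eq_conj (m n : ℕ) (μ : YoungDiagram)
    (hlen : μ.colLen 0 ≤ m + n) (hasym : μ.IsAsymmetric m) :
    ∏ u ∈ μ.cells, qint (((m : ℤ) + (n : ℤ) + ((u.2 : ℤ) - (u.1 : ℤ))).toNat) =
      ∏ u ∈ μ.transpose.cells, qint (((n : ℤ) + ((u.2 : ℤ) - (u.1 : ℤ))).toNat) :=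
  prod_qint_content_eq_conj_general m n μ hasym
end
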